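/- Let P = conv(u_0, u_1, u_2, u_3, u_4) ⊆ ℝ^4 be a full-dimensional lattice simplex with lattice length l(P) ≥ 3. For each 0 ≤ i ≤ 4 define A_i = 1 − Σ_{j≠i} r_{ij,3}/(l_{ij} − r_{ij,3}). If A_i ≥ 0 for all 0 ≤ i ≤ 4, then P = ⋃_{i=0}^4 P_{i,3}. -/

import Mathlib

/-!
Write a point of `P` in barycentric coordinates `w`. The ratios
`ρ_{ij} = r_{ij,3} / (l_{ij} - r_{ij,3})` are symmetric in `i, j` and `A_j ≥ 0` says that
`∑_{i ≠ j} ρ_{ij} ≤ 1`, so summing over all vertices shows that some vertex `u_i` satisfies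
`∑_{j ≠ i} w_j ρ_{ij} ≤ w_i`. The vertices of `P_{i,3}` other than `u_i` lie on the edges
`[u_i, u_j]`, and sliding the weight `w_j` from `u_j` to the vertex of `P_{i,3}` on that edge
costs the vertex `u_i` exactly `w_j ρ_{ij}`; the inequality says it can afford all of them, so the
point lies in `P_{i,3}`.
-/

open Finset Pointwise

noncomputable section

/-- The real point corresponding to a lattice point. -/
def toR {n : ℕ} (v : Fin n → ℤ) : Fin n → ℝ := fun x => (v x : ℝ)

/-- The lattice simplex (as a subset of `ℝ^n`) with the given lattice vertices. -/
def lsimplex {n m : ℕ} (u : Fin m → Fin n → ℤ) : Set (Fin n → ℝ) :=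
  convexHull ℝ (Set.range fun i => toR (u i))

/-- The lattice length `l_{ij}` of the edge `u_i u_j`:
the gcd of the coordinates of `u_j - u_i`. -/
def latLen {n m : ℕ} (u : Fin m → Fin n → ℤ) (i j : Fin m) : ℕ :=
  Finset.univ.gcd fun x => (u j x - u i x).natAbs

/-- `r_{ij,k}`: the least nonnegative residue of `l_{ij}` modulo `k`. -/
def rmod {n m : ℕ} (u : Fin m → Fin n → ℤ) (i j : Fin m) (k : ℕ) : ℕ :=
  latLen u i j % k

/-- The vertices of the `k`-dilation `P_{i,k}`: the vertex `u_i` together with, for `j ≠ i`,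
the points `((l_{ij} - r_{ij,k})/l_{ij})·u_j + (r_{ij,k}/l_{ij})·u_i`. -/
def dilVert {n m : ℕ} (u : Fin m → Fin n → ℤ) (i : Fin m) (k : ℕ) (j : Fin m) :
    Fin n → ℝ :=
  if j = i then toR (u i)
  else
    ((((latLen u i j : ℝ) - (rmod u i j k : ℝ)) / (latLen u i j : ℝ)) • toR (u j))
      + (((rmod u i j k : ℝ) / (latLen u i j : ℝ)) • toR (u i))

/-- The `k`-dilation `P_{i,k}`. -/
def dil {n m : ℕ} (u : Fin m → Fin n → ℤ) (i : Fin m) (k : ℕ) : Set (Fin n → ℝ) :=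
  convexHull ℝ (Set.range (dilVert u i k))

/-- The primitive edge vector `ũ_{ij} = (u_j - u_i)/l_{ij}`. -/
def primVec {n m : ℕ} (u : Fin m → Fin n → ℤ) (i j : Fin m) : Fin n → ℝ :=
  (latLen u i j : ℝ)⁻¹ • (toR (u j) - toR (u i))

/-- The translated `k`-dilation `P_{i,k,t} = P_{i,k} + Σ_{j ≠ i} t_j ũ_{ij}`. -/
def dilT {n m : ℕ} (u : Fin m → Fin n → ℤ) (i : Fin m) (k : ℕ) (t : Fin m → ℕ) :
    Set (Fin n → ℝ) :=
  (fun y => y + ∑ j ∈ Finset.univ.erase i, (t j : ℝ) • primVec u i j) '' dil u i k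

open Set

section ConvexHull

variable {ι E : Type*} [AddCommGroup E] [Module ℝ E]

theorem convexHull_range_eq_image_stdSimplex [Fintype ι] (v : ι → E) :
    convexHull ℝ (range v) = (fun w => ∑ j, w j • v j) '' stdSimplex ℝ ι := by
  classical
  have hlin : (fun w : ι → ℝ => ∑ j, w j • v j) = Fintype.linearCombination ℝ v := by
    ext w; simp [Fintype.linearCombination_apply]
  rw [← convexHull_basis_eq_stdSimplex, hlin, LinearMap.image_convexHull, ← range_comp]
  congr 2
  ext j
  simp [Fintype.linearCombination_apply]

theorem convexHull_range_subset_of_eq_add_smul {v d : ι → E} {a b : ι → ℝ}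
    {i : ι} (hdi : d i = v i) (hd : ∀ j ≠ i, d j = a j • v j + b j • v i)
    (ha : ∀ j ≠ i, 0 ≤ a j) (hb : ∀ j ≠ i, 0 ≤ b j) (hab : ∀ j ≠ i, a j + b j = 1) :
    convexHull ℝ (range d) ⊆ convexHull ℝ (range v) := by
  refine convexHull_min ?_ (convex_convexHull ℝ _)
  rintro _ ⟨j, rfl⟩
  have hvj := subset_convexHull ℝ (range v) (mem_range_self j)
  by_cases hji : j = i
  · subst hji
    rwa [hdi]
  · rw [hd j hji]
    exact convex_convexHull ℝ _ hvj (subset_convexHull ℝ _ (mem_range_self i))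
      (ha j hji) (hb j hji) (hab j hji)

theorem sum_smul_mem_convexHull_of_sum_mul_div_le [Fintype ι] [DecidableEq ι] {v d : ι → E}
    {a b w : ι → ℝ} {i : ι} (hdi : d i = v i) (hd : ∀ j ≠ i, d j = a j • v j + b j • v i)
    (ha : ∀ j ≠ i, 0 < a j) (hab : ∀ j ≠ i, a j + b j = 1) (hw : w ∈ stdSimplex ℝ ι)
    (hwi : ∑ j ∈ univ.erase i, w j * (b j / a j) ≤ w i) :
    ∑ j, w j • v j ∈ convexHull ℝ (range d) := by
  set S := ∑ j ∈ univ.erase i, w j * (b j / a j)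
  -- `v j = (1 / a j) • d j - (b j / a j) • v i`: moving the weight of each `v j` onto `d j`
  -- takes `w j * (b j / a j)` away from `v i`, which `hwi` says `v i` can afford.
  let c : ι → ℝ := fun j => if j = i then w i - S else w j / a j
  have hc_erase : ∀ j ∈ univ.erase i, c j = w j + w j * (b j / a j) := by
    intro j hj
    have hji := ne_of_mem_erase hj
    have := (ha j hji).ne'
    simp only [c, if_neg hji]
    rw [show b j = 1 - a j by linarith [hab j hji]]
    field_simp
    ring
  have hcd_erase : ∀ j ∈ univ.erase i, c j • d j = w j • v j + (w j * (b j / a j)) • v i := by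
    intro j hj
    have hji := ne_of_mem_erase hj
    have := (ha j hji).ne'
    simp only [c, if_neg hji]
    rw [hd j hji, smul_add, smul_smul, smul_smul, div_mul_cancel₀ _ this, div_mul_eq_mul_div,
      mul_div_assoc]
  rw [convexHull_range_eq_image_stdSimplex]
  refine ⟨c, ⟨fun j => ?_, ?_⟩, ?_⟩
  · by_cases hji : j = i
    · simp only [c, if_pos hji]; linarith
    · simp only [c, if_neg hji]; exact div_nonneg (hw.1 j) (ha j hji).le
  · rw [← add_sum_erase _ _ (mem_univ i), sum_congr rfl hc_erase, sum_add_distrib,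
      ← hw.2, ← add_sum_erase _ _ (mem_univ i)]
    simp only [c, if_pos rfl]
    ring
  · beta_reduce
    rw [← add_sum_erase _ _ (mem_univ i), sum_congr rfl hcd_erase, sum_add_distrib, ← sum_smul,
      ← add_sum_erase _ (fun j => w j • v j) (mem_univ i)]
    simp only [c, if_pos rfl, hdi, sub_smul]
    abel

end ConvexHull

theorem exists_sum_erase_mul_le {ι : Type*} [Fintype ι] [DecidableEq ι] [Nonempty ι]
    {ρ : ι → ι → ℝ} (hcol : ∀ j, ∑ i ∈ univ.erase j, ρ i j ≤ 1) {w : ι → ℝ}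
    (hw : ∀ j, 0 ≤ w j) : ∃ i, ∑ j ∈ univ.erase i, w j * ρ i j ≤ w i := by
  by_contra! hlt
  have hswap : ∑ i, ∑ j ∈ univ.erase i, w j * ρ i j = ∑ j, w j * ∑ i ∈ univ.erase j, ρ i j := by
    simp_rw [mul_sum]
    exact sum_comm' fun i j => by simp [ne_comm, and_comm]
  have : ∑ i, w i < ∑ i, w i :=
    calc ∑ i, w i < ∑ i, ∑ j ∈ univ.erase i, w j * ρ i j :=
          sum_lt_sum_of_nonempty univ_nonempty fun i _ => hlt i
      _ = ∑ j, w j * ∑ i ∈ univ.erase j, ρ i j := hswap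
      _ ≤ ∑ j, w j := sum_le_sum fun j _ => mul_le_of_le_one_right (hw j) (hcol j)
  exact lt_irrefl _ this

section Lattice

variable {n m : ℕ} (u : Fin m → Fin n → ℤ)

theorem latLen_comm (i j : Fin m) : latLen u i j = latLen u j i := by
  unfold latLen
  congr 1
  funext x
  rw [← Int.natAbs_neg, neg_sub]

theorem rmod_comm (i j : Fin m) (k : ℕ) : rmod u i j k = rmod u j i k := by
  rw [rmod, rmod, latLen_comm]

theorem rmod_lt_latLen {i j : Fin m} {k : ℕ} (hk : 0 < k) (hl : k ≤ latLen u i j) :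
    rmod u i j k < latLen u i j :=
  (Nat.mod_lt _ hk).trans_le hl

theorem dil_subset_lsimplex {i : Fin m} {k : ℕ} (hl : ∀ j ≠ i, 0 < latLen u i j) :
    dil u i k ⊆ lsimplex u := by
  refine convexHull_range_subset_of_eq_add_smul (if_pos rfl) (fun j hji => if_neg hji)
    (fun j hji => ?_) (fun j hji => ?_) (fun j hji => ?_)
  · exact div_nonneg (sub_nonneg.2 (by exact_mod_cast Nat.mod_le _ _)) (Nat.cast_nonneg _)
  · positivity
  · have := (hl j hji).ne'
    field_simp
    ring

theorem sum_smul_mem_dil {i : Fin m} {k : ℕ} (hk : 0 < k) (hl : ∀ j ≠ i, k ≤ latLen u i j)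
    {w : Fin m → ℝ} (hw : w ∈ stdSimplex ℝ (Fin m))
    (hwi : ∑ j ∈ univ.erase i,
      w j * ((rmod u i j k : ℝ) / ((latLen u i j : ℝ) - (rmod u i j k : ℝ))) ≤ w i) :
    ∑ j, w j • toR (u j) ∈ dil u i k := by
  have hr : ∀ j ≠ i, (rmod u i j k : ℝ) < latLen u i j := fun j hji => by
    exact_mod_cast rmod_lt_latLen u hk (hl j hji)
  have hl0 : ∀ j ≠ i, (0 : ℝ) < latLen u i j := fun j hji => by
    exact_mod_cast hk.trans_le (hl j hji)
  refine sum_smul_mem_convexHull_of_sum_mul_div_le (if_pos rfl) (fun j hji => if_neg hji)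
    (fun j hji => ?_) (fun j hji => ?_) hw ?_
  · exact div_pos (sub_pos.2 (hr j hji)) (hl0 j hji)
  · have := (hl0 j hji).ne'
    field_simp
    ring
  · refine (sum_congr rfl fun j hj => ?_).trans_le hwi
    rw [div_div_div_cancel_right₀ (hl0 j (ne_of_mem_erase hj)).ne']

end Lattice

theorem dim4_cover_of_A_nonneg_general
    (u : Fin 5 → Fin 4 → ℤ)
    (hlen : ∀ i j, i ≠ j → 3 ≤ latLen u i j)
    (A : Fin 5 → ℝ)
    (hA : ∀ i, A i = 1 - ∑ j ∈ Finset.univ.erase i,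
      (rmod u i j 3 : ℝ) / ((latLen u i j : ℝ) - (rmod u i j 3 : ℝ)))
    (hAnn : ∀ i, 0 ≤ A i) :
    lsimplex u = ⋃ i, dil u i 3 := by
  refine subset_antisymm ?_ (iUnion_subset fun i =>
    dil_subset_lsimplex u fun j hji => three_pos.trans_le (hlen i j hji.symm))
  intro x hx
  rw [lsimplex, convexHull_range_eq_image_stdSimplex] at hx
  obtain ⟨w, hw, rfl⟩ := hx
  have hcol : ∀ j, ∑ i ∈ univ.erase j,
      (rmod u i j 3 : ℝ) / ((latLen u i j : ℝ) - (rmod u i j 3 : ℝ)) ≤ 1 := fun j => by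
    simp only [latLen_comm u _ j, rmod_comm u _ j]
    linarith [hA j, hAnn j]
  obtain ⟨i, hi⟩ := exists_sum_erase_mul_le hcol hw.1
  exact mem_iUnion.2 ⟨i, sum_smul_mem_dil u three_pos (fun j hji => hlen i j hji.symm) hw hi⟩

/-- in dimension 4, if `A_i = 1 − Σ_{j≠i} r_{ij,3}/(l_{ij} − r_{ij,3}) ≥ 0`
for all `i`, then `P = ⋃_{i=0}^4 P_{i,3}`. -/
theorem dim4_cover_of_A_nonneg
    (u : Fin 5 → Fin 4 → ℤ)
    (hind : AffineIndependent ℝ fun i => toR (u i))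
    (hlen : ∀ i j, i ≠ j → 3 ≤ latLen u i j)
    (A : Fin 5 → ℝ)
    (hA : ∀ i, A i = 1 - ∑ j ∈ Finset.univ.erase i,
      (rmod u i j 3 : ℝ) / ((latLen u i j : ℝ) - (rmod u i j 3 : ℝ)))
    (hAnn : ∀ i, 0 ≤ A i) :
    lsimplex u = ⋃ i, dil u i 3 :=
  dim4_cover_of_A_nonneg_general u hlen A hA hAnn
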